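/- arXiv:alg-geom/9602011 — 4 statements merged into one kernel-verified Lean document; each statement's English description precedes it below -/
import Mathlib

section
/- Let k be a field and K a field extension of k. For the field of formal Laurent series L = K((t)), the residue map Res : Ω¹_{L/k} → K defined on a form ∑ aᵢ tⁱ dt (aᵢ ∈ K for the K-linear expansion) by Res(∑ aᵢ tⁱ dt) = a₋₁ is K-linear and vanishes on all exact forms d(f) for f ∈ L. -/
open LaurentSeries HahnSeries

/-- The formal derivative of a Laurent series: the coefficient of `tⁿ` in `f'` is
`(n+1) · (coefficient of `t^{n+1}` in `f`). -/
noncomputable def lderiv {K : Type*} [Field K] (f : LaurentSeries K) : LaurentSeries K where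
  coeff n := (n + 1 : ℤ) • f.coeff (n + 1)
  isPWO_support' := by
    refine Set.IsPWO.mono (Set.IsPWO.image_of_monotone f.isPWO_support'
      (f := fun n => n - 1) (fun a b hab => sub_le_sub_right hab 1)) ?_
    intro n hn
    have h : f.coeff (n + 1) ≠ 0 := by
      intro h0
      simp [HahnSeries.mem_support, h0] at hn
    exact ⟨n + 1, h, by ring⟩

/-- The residue of a Laurent series `f` (thought of as the 1-form `f dt`): the coefficient
of `t^{-1}`. -/
noncomputable def lres {K : Type*} [Field K] (f : LaurentSeries K) : K := f.coeff (-1)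

/-- for a field `k` and a field extension `K` of `k`, the residue map on
`L = K((t))`, sending `∑ aᵢ tⁱ dt` to `a₋₁`, is `K`-linear and vanishes on all exact
forms `d(f) = f' dt` for `f ∈ L`. -/
theorem residue_linear_and_vanishes_on_exact
    (k K : Type*) [Field k] [Field K] [Algebra k K] :
    (∀ (a : K) (f : LaurentSeries K), lres (a • f) = a * lres f) ∧
    (∀ f g : LaurentSeries K, lres (f + g) = lres f + lres g) ∧
    (∀ f : LaurentSeries K, lres (lderiv f) = 0) := by
  refine ⟨fun a f => ?_, fun f g => ?_, fun f => ?_⟩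
  · simp [lres]
  · simp [lres]
  · simp [lres, lderiv]
end

section
/- (Residue theorem for the projective line) Let k be a field of characteristic 0 and f ∈ k(t) a rational function in one variable. Then the sum over all monic irreducible polynomials p ∈ k[t] of Tr_{k[t]/(p) / k}(residue of f at p), plus the residue of f at infinity, equals zero. Equivalently for k algebraically closed: the sum of residues of f dt over all points of ℙ¹ is zero. -/
open RatFunc

/-- The residue of the rational 1-form `f dt` at the point `a ∈ k`: the coefficient of
`(t−a)^{-1}` in the Laurent expansion of `f` at `a` (obtained by shifting `t ↦ t + a`
and expanding at `0` as a formal Laurent series). -/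
noncomputable def residueAt {k : Type*} [Field k] (a : k) (f : RatFunc k) : k :=
  ((RatFunc.laurent a f : LaurentSeries k)).coeff (-1)

/-- The rational function `−s^{-2}·f(1/s)`, whose residue at `s = 0` is the residue of
`f dt` at infinity. -/
noncomputable def atInf {k : Type*} [Field k] (f : RatFunc k) : RatFunc k :=
  - (RatFunc.X : RatFunc k)⁻¹ ^ 2 *
    (Polynomial.aeval (RatFunc.X : RatFunc k)⁻¹ f.num /
      Polynomial.aeval (RatFunc.X : RatFunc k)⁻¹ f.denom)

namespace ResidueThmAux

open Polynomial

variable {k : Type*} [Field k]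

/-! ### The substitution `X ↦ X⁻¹` as a field homomorphism -/

noncomputable def phi (k : Type*) [Field k] : Polynomial k →ₐ[k] RatFunc k :=
  Polynomial.aeval (RatFunc.X : RatFunc k)⁻¹

lemma aeval_RX (p : k[X]) :
    Polynomial.aeval (RatFunc.X : RatFunc k) p = algebraMap k[X] (RatFunc k) p := by
  rw [← RatFunc.algebraMap_X, Polynomial.aeval_algebraMap_apply, Polynomial.aeval_X_left_apply]

lemma phi_injective : Function.Injective (phi k) := by
  have key : ∀ r : k[X], phi k r = 0 → r = 0 := by
    intro r h
    haveI : Invertible ((RatFunc.X : RatFunc k)⁻¹) :=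
      invertibleOfNonzero (inv_ne_zero RatFunc.X_ne_zero)
    have h2 : Polynomial.eval₂ (algebraMap k (RatFunc k)) ((RatFunc.X : RatFunc k)⁻¹) r = 0 := by
      rw [← Polynomial.aeval_def]; exact h
    have h3 := (Polynomial.eval₂_reflect_eq_zero_iff (algebraMap k (RatFunc k))
      ((RatFunc.X : RatFunc k)⁻¹) r.natDegree r le_rfl).mpr h2
    rw [invOf_eq_inv, inv_inv] at h3
    rw [← Polynomial.aeval_def, aeval_RX] at h3
    have h4 : Polynomial.reflect r.natDegree r = 0 :=
      (map_eq_zero_iff _ (IsFractionRing.injective k[X] (RatFunc k))).mp h3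
    exact Polynomial.reflect_eq_zero_iff.mp h4
  intro p q h
  have : phi k (p - q) = 0 := by rw [map_sub, h, sub_self]
  exact sub_eq_zero.mp (key _ this)

noncomputable def sigma (k : Type*) [Field k] : RatFunc k →ₐ[k] RatFunc k :=
  RatFunc.liftAlgHom (phi k)
    (nonZeroDivisors_le_comap_nonZeroDivisors_of_injective _ phi_injective)

lemma atInf_eq (f : RatFunc k) : atInf f = - (RatFunc.X : RatFunc k)⁻¹ ^ 2 * sigma k f := by
  rw [atInf, sigma, RatFunc.liftAlgHom_apply]; rfl

lemma sigma_algebraMap (p : k[X]) :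
    sigma k (algebraMap k[X] (RatFunc k) p) = Polynomial.aeval (RatFunc.X : RatFunc k)⁻¹ p := by
  rw [sigma]
  have := RatFunc.liftAlgHom_apply_div (S := k) (φ := phi k)
    (hφ := nonZeroDivisors_le_comap_nonZeroDivisors_of_injective _ phi_injective) p 1
  simpa [phi] using this

lemma sigma_X : sigma k (RatFunc.X) = (RatFunc.X : RatFunc k)⁻¹ := by
  rw [← RatFunc.algebraMap_X, sigma_algebraMap, Polynomial.aeval_X, RatFunc.algebraMap_X]

lemma sigma_C (a : k) : sigma k (RatFunc.C a) = RatFunc.C a := by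
  rw [← RatFunc.algebraMap_C, sigma_algebraMap, Polynomial.aeval_C]
  rfl

/-! ### Linearity of the residues -/

lemma ratFunc_coe_C (c : k) :
    ((RatFunc.C c : RatFunc k) : LaurentSeries k) = HahnSeries.C c := by
  rw [← RatFunc.algebraMap_C]
  have := RatFunc.coe_coe (Polynomial.C c)
  rw [Polynomial.coe_C, PowerSeries.coe_C] at this
  exact this.symm

lemma residueAt_add (a : k) (f g : RatFunc k) :
    residueAt a (f + g) = residueAt a f + residueAt a g := by
  unfold residueAt
  rw [map_add, map_add, HahnSeries.coeff_add]

lemma residueAt_smul (a c : k) (f : RatFunc k) :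
    residueAt a (c • f) = c * residueAt a f := by
  unfold residueAt
  rw [map_smul, RatFunc.smul_eq_C_mul, map_mul, ratFunc_coe_C, HahnSeries.C_mul_eq_smul, HahnSeries.coeff_smul, smul_eq_mul]

lemma residueAt_zero (a : k) : residueAt a (0 : RatFunc k) = 0 := by
  unfold residueAt
  rw [map_zero, map_zero, HahnSeries.coeff_zero]

lemma atInf_add (f g : RatFunc k) : atInf (f + g) = atInf f + atInf g := by
  rw [atInf_eq, atInf_eq, atInf_eq, map_add, mul_add]

lemma atInf_smul (c : k) (f : RatFunc k) : atInf (c • f) = c • atInf f := by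
  rw [atInf_eq, atInf_eq, map_smul, mul_smul_comm]

lemma atInf_zero : atInf (0 : RatFunc k) = 0 := by
  rw [atInf_eq, map_zero, mul_zero]

/-! ### Laurent series coefficient computations -/

lemma coeff_neg_one_coe (P : PowerSeries k) :
    ((P : LaurentSeries k)).coeff (-1) = 0 := by
  rw [PowerSeries.coeff_coe]; simp

lemma coe_inv_powerSeries (P : PowerSeries k) (h : PowerSeries.constantCoeff P ≠ 0) :
    ((P : LaurentSeries k))⁻¹ = ((P⁻¹ : PowerSeries k) : LaurentSeries k) := by
  apply inv_eq_of_mul_eq_one_right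
  rw [← PowerSeries.coe_mul, PowerSeries.mul_inv_cancel _ h, PowerSeries.coe_one]

lemma ratfunc_coe_inv (f : RatFunc k) :
    ((f⁻¹ : RatFunc k) : LaurentSeries k) = ((f : LaurentSeries k))⁻¹ := by
  rw [inv_eq_one_div, map_div₀, map_one, one_div]

lemma residueAt_zero_eq (f : RatFunc k) :
    residueAt 0 f = ((f : LaurentSeries k)).coeff (-1) := by
  unfold residueAt; rw [RatFunc.laurent_at_zero]

lemma coe_X_inv : (((RatFunc.X : RatFunc k)⁻¹ : RatFunc k) : LaurentSeries k) =
    HahnSeries.single (-1 : ℤ) 1 := by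
  rw [inv_eq_one_div, map_div₀, map_one, one_div, RatFunc.coe_X,
    HahnSeries.inv_single, inv_one]

/-! ### Residues at finite points -/

lemma residueAt_algebraMap (b : k) (p : k[X]) :
    residueAt b (algebraMap k[X] (RatFunc k) p) = 0 := by
  unfold residueAt
  rw [RatFunc.laurent_algebraMap,
    show (algebraMap k[X] (RatFunc k)) (Polynomial.taylor b p) =
      ((Polynomial.taylor b p : k[X]) : RatFunc k) from rfl, ← RatFunc.coe_coe]
  exact coeff_neg_one_coe _

lemma laurent_inv_pow (b a : k) (n : ℕ) :
    RatFunc.laurent b (((RatFunc.X - RatFunc.C a : RatFunc k))⁻¹ ^ n) =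
      ((RatFunc.X + RatFunc.C (b - a) : RatFunc k))⁻¹ ^ n := by
  rw [map_pow, map_inv₀, map_sub, RatFunc.laurent_X, RatFunc.laurent_C, map_sub]
  ring_nf

lemma coe_X_add_C (c : k) :
    ((RatFunc.X + RatFunc.C c : RatFunc k) : LaurentSeries k) =
      (((Polynomial.X + Polynomial.C c : k[X]) : PowerSeries k) : LaurentSeries k) := by
  rw [map_add, RatFunc.coe_X, ratFunc_coe_C, Polynomial.coe_add, Polynomial.coe_X,
    Polynomial.coe_C, map_add, HahnSeries.ofPowerSeries_X, HahnSeries.ofPowerSeries_C]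

lemma residueAt_inv_pow_ne (b a : k) (hba : b ≠ a) (n : ℕ) :
    residueAt b (((RatFunc.X - RatFunc.C a : RatFunc k))⁻¹ ^ n) = 0 := by
  unfold residueAt
  have hc : PowerSeries.constantCoeff
      ((Polynomial.X + Polynomial.C (b - a) : k[X]) : PowerSeries k) ≠ 0 := by
    simp [sub_ne_zero.mpr hba]
  rw [laurent_inv_pow, map_pow, ratfunc_coe_inv, coe_X_add_C,
    coe_inv_powerSeries _ hc, ← PowerSeries.coe_pow]
  exact coeff_neg_one_coe _

lemma residueAt_inv_pow_self (a : k) (n : ℕ) :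
    residueAt a (((RatFunc.X - RatFunc.C a : RatFunc k))⁻¹ ^ n) = if n = 1 then 1 else 0 := by
  unfold residueAt
  rw [laurent_inv_pow, sub_self, map_zero, add_zero, map_pow, ratfunc_coe_inv,
    RatFunc.coe_X, HahnSeries.inv_single, inv_one]
  rw [HahnSeries.single_pow]
  simp only [one_pow, HahnSeries.coeff_single]
  have key : ((-1 : ℤ) = n • (-1 : ℤ)) ↔ n = 1 := by
    rw [nsmul_eq_mul]
    omega
  split_ifs with h1 h2 h2
  · rfl
  · exact absurd (key.mp h1) h2
  · exact absurd (key.mpr h2) h1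
  · rfl

/-! ### Residues at infinity -/

lemma residueInf_poly (p : k[X]) :
    residueAt 0 (- (RatFunc.X : RatFunc k)⁻¹ ^ 2 *
      Polynomial.aeval (RatFunc.X : RatFunc k)⁻¹ p) = 0 := by
  induction p using Polynomial.induction_on' with
  | add f g hf hg =>
      rw [map_add, mul_add, residueAt_add, hf, hg, add_zero]
  | monomial i c =>
      rw [Polynomial.aeval_monomial, RatFunc.algebraMap_eq_C]
      rw [residueAt_zero_eq]
      have : - (RatFunc.X : RatFunc k)⁻¹ ^ 2 * (RatFunc.C c * (RatFunc.X : RatFunc k)⁻¹ ^ i)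
          = - (RatFunc.C c * (RatFunc.X : RatFunc k)⁻¹ ^ (i + 2)) := by ring
      rw [this, map_neg, map_mul, map_pow, coe_X_inv, ratFunc_coe_C,
        HahnSeries.single_pow, HahnSeries.coeff_neg]
      rw [show (HahnSeries.C c : LaurentSeries k) = HahnSeries.single (0:ℤ) c from rfl,
        HahnSeries.single_mul_single]
      rw [HahnSeries.coeff_single]
      have : ((-1 : ℤ)) ≠ 0 + (i + 2) • (-1 : ℤ) := by
        rw [nsmul_eq_mul]; push_cast; omega
      rw [if_neg this, neg_zero]

section PoleAtInf
variable (a : k)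

lemma one_sub_eq : (1 - RatFunc.C a * RatFunc.X : RatFunc k) =
    algebraMap k[X] (RatFunc k) (1 - Polynomial.C a * Polynomial.X) := by
  rw [map_sub, map_one, map_mul, RatFunc.algebraMap_C, RatFunc.algebraMap_X]

lemma poly_one_sub_ne : (1 - Polynomial.C a * Polynomial.X : k[X]) ≠ 0 := fun h => by
  simpa using congrArg (Polynomial.eval 0) h

lemma u_ne : (1 - RatFunc.C a * RatFunc.X : RatFunc k) ≠ 0 := by
  rw [one_sub_eq]
  exact (map_ne_zero_iff _ (IsFractionRing.injective k[X] (RatFunc k))).mpr (poly_one_sub_ne a)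

lemma constCoeff_u : PowerSeries.constantCoeff
    ((1 - Polynomial.C a * Polynomial.X : k[X]) : PowerSeries k) ≠ 0 := by
  simp

lemma coe_u : ((1 - RatFunc.C a * RatFunc.X : RatFunc k) : LaurentSeries k) =
    (((1 - Polynomial.C a * Polynomial.X : k[X]) : PowerSeries k) : LaurentSeries k) := by
  rw [one_sub_eq, show (algebraMap k[X] (RatFunc k)) (1 - Polynomial.C a * Polynomial.X) =
    ((1 - Polynomial.C a * Polynomial.X : k[X]) : RatFunc k) from rfl, RatFunc.coe_coe]

lemma inv_shift : ((RatFunc.X : RatFunc k)⁻¹ - RatFunc.C a)⁻¹ =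
    RatFunc.X * (1 - RatFunc.C a * RatFunc.X : RatFunc k)⁻¹ := by
  have hX : (RatFunc.X : RatFunc k) ≠ 0 := RatFunc.X_ne_zero
  have h1 : (RatFunc.X : RatFunc k)⁻¹ - RatFunc.C a =
      (RatFunc.X)⁻¹ * (1 - RatFunc.C a * RatFunc.X) := by
      field_simp
  rw [h1, mul_inv, inv_inv]

lemma residueAt_u_inv_zero (c : k) (n : ℕ) :
    residueAt 0 (RatFunc.C c * ((1 - RatFunc.C a * RatFunc.X : RatFunc k)⁻¹) ^ n) = 0 := by
  rw [← RatFunc.smul_eq_C_mul, residueAt_smul, residueAt_zero_eq, map_pow,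
    ratfunc_coe_inv, coe_u, coe_inv_powerSeries _ (constCoeff_u a), ← PowerSeries.coe_pow,
    coeff_neg_one_coe, mul_zero]

lemma residueInf_simple :
    residueAt 0 (- (RatFunc.X : RatFunc k)⁻¹ ^ 2 *
      ((RatFunc.X : RatFunc k)⁻¹ - RatFunc.C a)⁻¹ ^ 1) = 0 + -1 := by
  have hX : (RatFunc.X : RatFunc k) ≠ 0 := RatFunc.X_ne_zero
  have hu := u_ne a
  have key : - (RatFunc.X : RatFunc k)⁻¹ ^ 2 * ((RatFunc.X : RatFunc k)⁻¹ - RatFunc.C a)⁻¹ ^ 1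
      = RatFunc.C (-a) * (1 - RatFunc.C a * RatFunc.X : RatFunc k)⁻¹ ^ 1 + (- RatFunc.X⁻¹) := by
    rw [inv_shift, pow_one, pow_one, map_neg]
    have hu' : (1 - RatFunc.X * RatFunc.C a : RatFunc k) ≠ 0 := by rwa [mul_comm]
    field_simp
    ring
  rw [key, residueAt_add, residueAt_u_inv_zero]
  congr 1
  rw [residueAt_zero_eq, map_neg, coe_X_inv, HahnSeries.coeff_neg,
    HahnSeries.coeff_single_same]

lemma residueInf_higher (n : ℕ) :
    residueAt 0 (- (RatFunc.X : RatFunc k)⁻¹ ^ 2 *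
      ((RatFunc.X : RatFunc k)⁻¹ - RatFunc.C a)⁻¹ ^ (n + 2)) = 0 := by
  have hX : (RatFunc.X : RatFunc k) ≠ 0 := RatFunc.X_ne_zero
  have hu := u_ne a
  have key : - (RatFunc.X : RatFunc k)⁻¹ ^ 2 *
      ((RatFunc.X : RatFunc k)⁻¹ - RatFunc.C a)⁻¹ ^ (n + 2)
      = RatFunc.C (-1) * (RatFunc.X ^ n *
          ((1 - RatFunc.C a * RatFunc.X : RatFunc k)⁻¹) ^ (n + 2)) := by
    rw [inv_shift, mul_pow]
    rw [show RatFunc.C (-1 : k) = -1 by rw [map_neg, map_one]]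
    field_simp
    ring
  rw [key, ← RatFunc.smul_eq_C_mul, residueAt_smul, residueAt_zero_eq]
  rw [map_mul, map_pow, map_pow, ratfunc_coe_inv, coe_u,
    coe_inv_powerSeries _ (constCoeff_u a), RatFunc.coe_X]
  rw [show (HahnSeries.single (1:ℤ) (1:k)) = ((PowerSeries.X : PowerSeries k) : LaurentSeries k) by
    rw [HahnSeries.ofPowerSeries_X]]
  rw [← PowerSeries.coe_pow, ← PowerSeries.coe_pow, ← PowerSeries.coe_mul, coeff_neg_one_coe,
    mul_zero]

end PoleAtInf

/-! ### The generating set and its span -/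

def G (k : Type*) [Field k] : Set (RatFunc k) :=
  {f | ∃ p : k[X], f = algebraMap k[X] (RatFunc k) p} ∪
  {f | ∃ (a : k) (n : ℕ), f = ((RatFunc.X - RatFunc.C a : RatFunc k))⁻¹ ^ (n + 1)}

lemma X_sub_C_ne (a : k) : (RatFunc.X - RatFunc.C a : RatFunc k) ≠ 0 := by
  rw [← RatFunc.algebraMap_X, ← RatFunc.algebraMap_C, ← map_sub]
  exact (map_ne_zero_iff _ (IsFractionRing.injective k[X] (RatFunc k))).mpr
    (Polynomial.X_sub_C_ne_zero a)

lemma partial_frac (a b : k) (hab : a ≠ b) :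
    ((RatFunc.X - RatFunc.C b : RatFunc k))⁻¹ * ((RatFunc.X - RatFunc.C a))⁻¹ =
      RatFunc.C (a - b)⁻¹ * (((RatFunc.X - RatFunc.C a))⁻¹ - ((RatFunc.X - RatFunc.C b))⁻¹) := by
  have ha := X_sub_C_ne (k := k) a
  have hb := X_sub_C_ne (k := k) b
  have hab' : RatFunc.C (a - b) ≠ 0 := by
    rw [map_ne_zero_iff _ (RatFunc.C : k →+* RatFunc k).injective]
    exact sub_ne_zero.mpr hab
  rw [map_inv₀, map_sub] at *
  field_simp
  ring

open Submodule in
lemma mul_inv_mem (a : k) :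
    ∀ g ∈ span k (G k), g * ((RatFunc.X - RatFunc.C a : RatFunc k))⁻¹ ∈ span k (G k) := by
  intro g hg
  induction hg using Submodule.span_induction with
  | mem x hx =>
      rcases hx with ⟨p, rfl⟩ | ⟨b, n, rfl⟩
      · have hdecomp : p = (Polynomial.X - Polynomial.C a) * (p /ₘ (Polynomial.X - Polynomial.C a))
            + Polynomial.C (p.eval a) := by
          conv_lhs => rw [← Polynomial.modByMonic_add_div p (Polynomial.X - Polynomial.C a)]
          rw [Polynomial.modByMonic_X_sub_C_eq_C_eval]
          ring
        have hXa := X_sub_C_ne (k := k) a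
        have : algebraMap k[X] (RatFunc k) p * ((RatFunc.X - RatFunc.C a))⁻¹ =
            algebraMap k[X] (RatFunc k) (p /ₘ (Polynomial.X - Polynomial.C a)) +
            (p.eval a) • ((RatFunc.X - RatFunc.C a : RatFunc k))⁻¹ ^ (0 + 1) := by
          conv_lhs => rw [hdecomp]
          rw [map_add, map_mul, map_sub, RatFunc.algebraMap_X, RatFunc.algebraMap_C,
            RatFunc.smul_eq_C_mul, ← RatFunc.algebraMap_C (p.eval a)]
          rw [add_mul, mul_comm (RatFunc.X - RatFunc.C a), mul_assoc, mul_inv_cancel₀ hXa,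
            mul_one, zero_add, pow_one]
        rw [this]
        exact add_mem (subset_span (Or.inl ⟨_, rfl⟩))
          (smul_mem _ _ (subset_span (Or.inr ⟨a, 0, rfl⟩)))
      · by_cases hab : a = b
        · subst hab
          have : ((RatFunc.X - RatFunc.C a : RatFunc k))⁻¹ ^ (n + 1) *
              ((RatFunc.X - RatFunc.C a))⁻¹ = ((RatFunc.X - RatFunc.C a))⁻¹ ^ (n + 1 + 1) := by
            rw [pow_succ _ (n+1), pow_succ _ n]
          rw [this]
          exact subset_span (Or.inr ⟨a, n + 1, rfl⟩)
        · have key : ∀ m : ℕ, ((RatFunc.X - RatFunc.C b : RatFunc k))⁻¹ ^ m *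
              ((RatFunc.X - RatFunc.C a))⁻¹ ∈ span k (G k) := by
            intro m
            induction m with
            | zero =>
                have h0 : ((RatFunc.X - RatFunc.C b : RatFunc k))⁻¹ ^ 0 *
                    ((RatFunc.X - RatFunc.C a))⁻¹ =
                    ((RatFunc.X - RatFunc.C a : RatFunc k))⁻¹ ^ (0 + 1) := by
                  rw [pow_zero, one_mul, zero_add, pow_one]
                rw [h0]
                exact subset_span (Or.inr ⟨a, 0, rfl⟩)
            | succ m ih =>
                have expand : ((RatFunc.X - RatFunc.C b : RatFunc k))⁻¹ ^ (m + 1) *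
                    ((RatFunc.X - RatFunc.C a))⁻¹ =
                    (a - b)⁻¹ • (((RatFunc.X - RatFunc.C b))⁻¹ ^ m *
                      ((RatFunc.X - RatFunc.C a))⁻¹) -
                    (a - b)⁻¹ • (((RatFunc.X - RatFunc.C b))⁻¹ ^ (m + 1)) := by
                  rw [pow_succ, mul_assoc, partial_frac a b hab]
                  rw [RatFunc.smul_eq_C_mul, RatFunc.smul_eq_C_mul]
                  ring
                rw [expand]
                exact sub_mem (smul_mem _ _ ih)
                  (smul_mem _ _ (subset_span (Or.inr ⟨b, m, rfl⟩)))
          exact key (n + 1)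
  | zero => simpa using zero_mem _
  | add x y _ _ hx hy => rw [add_mul]; exact add_mem hx hy
  | smul c x _ hx => rw [smul_mul_assoc]; exact smul_mem _ _ hx

open Submodule in
lemma key_mem (s : Multiset k) :
    ∀ p : k[X], algebraMap k[X] (RatFunc k) p *
      (s.map fun a => ((RatFunc.X - RatFunc.C a : RatFunc k))⁻¹).prod ∈ span k (G k) := by
  induction s using Multiset.induction_on with
  | empty =>
      intro p
      have hmem : algebraMap k[X] (RatFunc k) p ∈ G k := Or.inl ⟨p, rfl⟩
      simpa using subset_span hmem
  | cons a s ih =>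
      intro p
      rw [Multiset.map_cons, Multiset.prod_cons, show algebraMap k[X] (RatFunc k) p *
        (((RatFunc.X - RatFunc.C a : RatFunc k))⁻¹ *
          (s.map fun a => ((RatFunc.X - RatFunc.C a : RatFunc k))⁻¹).prod) =
        (algebraMap k[X] (RatFunc k) p *
          (s.map fun a => ((RatFunc.X - RatFunc.C a : RatFunc k))⁻¹).prod) *
          ((RatFunc.X - RatFunc.C a : RatFunc k))⁻¹ by ring]
      exact mul_inv_mem a _ (ih p)

open Submodule in
lemma span_G_top [IsAlgClosed k] (f : RatFunc k) : f ∈ span k (G k) := by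
  have hm := f.monic_denom
  have hsplit := (IsAlgClosed.splits f.denom).eq_prod_roots_of_monic hm
  have h1 : f = algebraMap k[X] (RatFunc k) f.num *
      (algebraMap k[X] (RatFunc k) f.denom)⁻¹ := by
    rw [← div_eq_mul_inv, RatFunc.num_div_denom]
  have h2 : (algebraMap k[X] (RatFunc k) f.denom)⁻¹ =
      ((f.denom.roots).map fun a => ((RatFunc.X - RatFunc.C a : RatFunc k))⁻¹).prod := by
    conv_lhs => rw [hsplit]
    rw [map_multiset_prod, Multiset.map_map]
    have : ∀ s : Multiset k,
        ((s.map fun a => algebraMap k[X] (RatFunc k) (Polynomial.X - Polynomial.C a)).prod)⁻¹ =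
        (s.map fun a => ((RatFunc.X - RatFunc.C a : RatFunc k))⁻¹).prod := by
      intro s
      induction s using Multiset.induction_on with
      | empty => simp
      | cons a s ih =>
          rw [Multiset.map_cons, Multiset.prod_cons, Multiset.map_cons, Multiset.prod_cons,
            mul_inv, ih, map_sub, RatFunc.algebraMap_X, RatFunc.algebraMap_C]
    rw [← this]
    congr 1
  rw [h1, h2]
  exact key_mem _ f.num

/-! ### The submodule of rational functions satisfying the residue theorem -/

noncomputable def M (k : Type*) [Field k] : Submodule k (RatFunc k) where
  carrier := {f | (Function.support fun a => residueAt a f).Finite ∧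
    (∑ᶠ a, residueAt a f) + residueAt 0 (atInf f) = 0}
  zero_mem' := by
    constructor
    · have : (fun a : k => residueAt a (0 : RatFunc k)) = fun _ => 0 :=
        funext fun a => residueAt_zero a
      rw [this]
      simp
    · have : (fun a : k => residueAt a (0 : RatFunc k)) = fun _ => 0 :=
        funext fun a => residueAt_zero a
      rw [this, finsum_zero, atInf_zero, residueAt_zero, add_zero]
  add_mem' := by
    rintro f g ⟨hf1, hf2⟩ ⟨hg1, hg2⟩
    have heq : (fun a : k => residueAt a (f + g)) =
        (fun a => residueAt a f) + fun a => residueAt a g :=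
      funext fun a => residueAt_add a f g
    constructor
    · rw [heq]
      exact (hf1.union hg1).subset (Function.support_add _ _)
    · have hsum : (∑ᶠ a, residueAt a (f + g)) =
          (∑ᶠ a, residueAt a f) + ∑ᶠ a, residueAt a g := by
        have := finsum_add_distrib hf1 hg1
        simp only [residueAt_add]
        convert this using 2
      rw [hsum, atInf_add, residueAt_add]
      linear_combination hf2 + hg2
  smul_mem' := by
    rintro c f ⟨hf1, hf2⟩
    have heq : (fun a : k => residueAt a (c • f)) = fun a => c * residueAt a f :=
      funext fun a => residueAt_smul a c f
    constructor
    · rw [heq]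
      apply hf1.subset
      intro a ha
      simp only [Function.mem_support] at ha ⊢
      exact fun h => ha (by rw [h, mul_zero])
    · have hsum : (∑ᶠ a, residueAt a (c • f)) = c * ∑ᶠ a, residueAt a f := by
        rw [mul_finsum' _ _ hf1]
        simp only [residueAt_smul]
      rw [hsum, atInf_smul, residueAt_smul]
      linear_combination c * hf2

lemma G_subset_M : G k ⊆ (M k : Set (RatFunc k)) := by
  rintro f (⟨p, rfl⟩ | ⟨a, n, rfl⟩)
  · constructor
    · have : (fun b : k => residueAt b (algebraMap k[X] (RatFunc k) p)) = fun _ => 0 :=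
        funext fun b => residueAt_algebraMap b p
      rw [this]
      simp
    · have h1 : (fun b : k => residueAt b (algebraMap k[X] (RatFunc k) p)) = fun _ => 0 :=
        funext fun b => residueAt_algebraMap b p
      rw [h1, finsum_zero, atInf_eq, sigma_algebraMap, residueInf_poly, add_zero]
  · have hsig : sigma k (((RatFunc.X - RatFunc.C a : RatFunc k))⁻¹ ^ (n + 1)) =
        ((RatFunc.X : RatFunc k)⁻¹ - RatFunc.C a)⁻¹ ^ (n + 1) := by
      rw [map_pow, map_inv₀, map_sub, sigma_X, sigma_C]
    constructor
    · apply Set.Finite.subset (Set.finite_singleton a)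
      intro b hb
      simp only [Function.mem_support] at hb
      by_contra hba
      exact hb (residueAt_inv_pow_ne b a hba (n + 1))
    · rw [finsum_eq_single _ a (fun b hb => residueAt_inv_pow_ne b a hb (n + 1)),
        residueAt_inv_pow_self, atInf_eq, hsig]
      cases n with
      | zero =>
          rw [residueInf_simple]
          norm_num
      | succ m =>
          rw [residueInf_higher a m]
          norm_num

end ResidueThmAux

/-- Residue theorem for the projective line: over an algebraically closed
field `k` of characteristic 0, for any rational function `f ∈ k(t)`, the sum of the
residues of `f dt` over all points `a ∈ k`, plus the residue at infinity, is zero. -/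
theorem residue_theorem_P1 (k : Type*) [Field k] [CharZero k] [IsAlgClosed k]
    (f : RatFunc k) :
    (∑ᶠ a : k, residueAt a f) + residueAt 0 (atInf f) = 0 := by
  have hf : f ∈ ResidueThmAux.M k :=
    (Submodule.span_le.mpr ResidueThmAux.G_subset_M) (ResidueThmAux.span_G_top f)
  exact hf.2
end

section
/- Let k be a field, M a complete separated linearly topologized k-vector space, and M₁ ⊆ M₂ ⊆ M closed subspaces. Then restriction of functionals gives an exact sequence 0 → M₂^⊥ → M₁^⊥ → (M₂/M₁)* → 0 of k-vector spaces, where M* denotes continuous dual and ⊥ denotes annihilator in M*. -/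
/-- let `k` be a (discrete) field and `M` a complete, separated, linearly
topologized topological `k`-vector space, and let `p ⊆ q ⊆ M` be closed subspaces. Then
restriction of continuous functionals gives an exact sequence
`0 → q^⊥ → p^⊥ → (q/p)* → 0`. Here `(q/p)*` is identified with the space of continuous
functionals on `q` (subspace topology) vanishing on `p`; exactness at `p^⊥` is the
statement that a functional vanishing on `p` restricts to `0` on `q` iff it lies in
`q^⊥`, and surjectivity is the Hahn–Banach extension property. -/
theorem perp_exact_sequence (k : Type*) [Field k] [TopologicalSpace k] [DiscreteTopology k]
    (M : Type*) [AddCommGroup M] [Module k M] [UniformSpace M]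
    [IsUniformAddGroup M] [ContinuousSMul k M] [CompleteSpace M] [T2Space M]
    (hlin : ∀ U ∈ nhds (0 : M), ∃ S : Submodule k M, (S : Set M) ⊆ U ∧ (S : Set M) ∈ nhds 0)
    (p q : Submodule k M) (hpq : p ≤ q)
    (hp : IsClosed (p : Set M)) (hq : IsClosed (q : Set M)) :
    -- the inclusion `q^⊥ ⊆ p^⊥` (injectivity of the first map)
    (∀ φ : M →L[k] k, (∀ x ∈ q, φ x = 0) → ∀ x ∈ p, φ x = 0) ∧
    -- exactness at `p^⊥`: a functional vanishing on `p` restricts to zero on `q`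
    -- iff it vanishes on `q`
    (∀ φ : M →L[k] k, (∀ x ∈ p, φ x = 0) →
      (φ.comp q.subtypeL = 0 ↔ ∀ x ∈ q, φ x = 0)) ∧
    -- surjectivity onto `(q/p)*`: every continuous functional on `q` vanishing on `p`
    -- extends to a continuous functional on `M`
    (∀ ψ : q →L[k] k, (∀ x : q, (x : M) ∈ p → ψ x = 0) →
      ∃ φ : M →L[k] k, (∀ x ∈ p, φ x = 0) ∧ φ.comp q.subtypeL = ψ) := by
  refine ⟨fun φ h x hx => h x (hpq hx), ?_, ?_⟩
  · intro φ _
    constructor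
    · intro h x hx
      have := DFunLike.congr_fun h ⟨x, hx⟩
      simpa using this
    · intro h
      ext x
      simpa using h x x.2
  · intro ψ hψ
    -- find an open submodule S with S ∩ q ⊆ ker ψ
    have hU : IsOpen (ψ ⁻¹' {0}) := (isOpen_discrete _).preimage ψ.continuous
    obtain ⟨V, hV, hVeq⟩ := isOpen_induced_iff.mp hU
    have h0V : (0 : M) ∈ V := by
      have : (0 : q) ∈ ψ ⁻¹' {0} := by simp
      rw [← hVeq] at this
      exact this
    obtain ⟨S, hSV, hSnhds⟩ := hlin V (hV.mem_nhds h0V)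
    have hSker : ∀ x : q, (x : M) ∈ S → ψ x = 0 := by
      intro x hx
      have : x ∈ ψ ⁻¹' {0} := by rw [← hVeq]; exact hSV hx
      simpa using this
    -- factor ψ through M/S algebraically
    set π : M →ₗ[k] M ⧸ S := S.mkQ with hπ
    set h : q →ₗ[k] M ⧸ S := π ∘ₗ q.subtype with hh
    have hker : LinearMap.ker h ≤ LinearMap.ker (ψ : q →ₗ[k] k) := by
      intro x hx
      have : π (x : M) = 0 := hx
      have hxS : (x : M) ∈ S := by
        rwa [hπ, Submodule.mkQ_apply, Submodule.Quotient.mk_eq_zero] at this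
      exact hSker x hxS
    set g₀ : LinearMap.range h →ₗ[k] k :=
      ((LinearMap.ker h).liftQ (ψ : q →ₗ[k] k) hker) ∘ₗ h.quotKerEquivRange.symm.toLinearMap with hg₀
    obtain ⟨g, hg⟩ := g₀.exists_extend
    set φ₀ : M →ₗ[k] k := g ∘ₗ π with hφ₀
    have hφ₀S : ∀ x ∈ S, φ₀ x = 0 := by
      intro x hx
      have : π x = 0 := by
        rw [hπ, Submodule.mkQ_apply, Submodule.Quotient.mk_eq_zero]; exact hx
      simp [hφ₀, this]
    have hφ₀q : ∀ x : q, φ₀ (x : M) = ψ x := by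
      intro x
      have h1 : φ₀ (x : M) = g (h x) := rfl
      have h2 : g (h x) = g₀ ⟨h x, LinearMap.mem_range_self h x⟩ :=
        DFunLike.congr_fun hg ⟨h x, LinearMap.mem_range_self h x⟩
      have h3 : g₀ ⟨h x, LinearMap.mem_range_self h x⟩ = ψ x := by
        rw [hg₀]
        simp only [LinearMap.coe_comp, Function.comp_apply, LinearEquiv.coe_coe]
        rw [LinearMap.quotKerEquivRange_symm_apply_image h x (LinearMap.mem_range_self h x)]
        simp
      rw [h1, h2, h3]
    -- continuity
    have hcont : Continuous φ₀ := by
      rw [continuous_iff_continuousAt]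
      intro x
      have key : {y : M | φ₀ y = φ₀ x} ∈ nhds x := by
        rw [← map_add_left_nhds_zero x, Filter.mem_map]
        refine Filter.mem_of_superset hSnhds ?_
        intro s hs
        simp only [Set.mem_preimage, Set.mem_setOf_eq, map_add]
        rw [hφ₀S s hs, add_zero]
      intro s hs
      rw [Filter.mem_map]
      filter_upwards [key] with y hy
      simp only [Set.mem_preimage]
      rw [hy]
      exact mem_of_mem_nhds hs
    refine ⟨⟨φ₀, hcont⟩, ?_, ?_⟩
    · intro x hx
      have := hφ₀q ⟨x, hpq hx⟩
      simpa [hψ ⟨x, hpq hx⟩ hx] using this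
    · ext x
      simpa using hφ₀q x
end

section
/- Let K be a field of characteristic 0, A = K[[t₁, …, t_n]], and M an A-module equipped with commuting K-linear derivations ∂₁, …, ∂_n satisfying ∂ᵢ(a·m) = (∂a/∂tᵢ)·m + a·∂ᵢ(m). If M is finitely generated over A, then the multiplication map A ⊗_K W → M is an isomorphism, where W = {m ∈ M : ∂ᵢ m = 0 for all i} is the K-space of horizontal elements. -/
open scoped TensorProduct

/-- The partial derivative `∂/∂tᵢ` on the formal power series ring `K[[t₁, …, t_n]]`. -/
noncomputable def mvPderiv {K : Type*} [Field K] {n : ℕ} (i : Fin n)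
    (a : MvPowerSeries (Fin n) K) : MvPowerSeries (Fin n) K :=
  fun m => ((m i + 1 : ℕ) : K) * MvPowerSeries.coeff (m + Finsupp.single i 1) a

variable {K : Type*} [Field K] {n : ℕ}
  {M : Type*} [AddCommGroup M] [Module (MvPowerSeries (Fin n) K) M]
  [Module K M] [IsScalarTower K (MvPowerSeries (Fin n) K) M]
  [SMulCommClass K (MvPowerSeries (Fin n) K) M]

/-- The `K`-subspace of horizontal elements: those killed by all the derivations `∂ᵢ`. -/
def horiz (D : Fin n → (M →ₗ[K] M)) : Submodule K M where
  carrier := {m : M | ∀ i, D i m = 0}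
  add_mem' := by intro x y hx hy i; simp [hx i, hy i]
  zero_mem' := by intro i; simp
  smul_mem' := by intro c x hx i; simp [hx i]

/-- The multiplication map `A ⊗_K W → M`, `a ⊗ w ↦ a • w`, where `W` is the space of
horizontal elements. -/
noncomputable def mulMap (D : Fin n → (M →ₗ[K] M)) :
    (MvPowerSeries (Fin n) K) ⊗[K] (horiz D) →ₗ[K] M :=
  TensorProduct.lift
    (LinearMap.mk₂ K (fun (a : MvPowerSeries (Fin n) K) (w : horiz D) => a • (w : M))
      (fun a b w => add_smul a b (w : M))
      (fun c a w => smul_assoc c a (w : M))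
      (fun a w₁ w₂ => by simp [smul_add])
      (fun c a w => by
        show a • ((c • w : horiz D) : M) = c • (a • (w : M))
        rw [Submodule.coe_smul, smul_comm]))


namespace KatzAux
open MvPowerSeries Finset
variable {K : Type*} [Field K] {n : ℕ}
local notation "A" => MvPowerSeries (Fin n) K

def dg (m : Fin n →₀ ℕ) : ℕ := ∑ i, m i

lemma dg_single (i : Fin n) (j : ℕ) : dg (Finsupp.single i j) = j := by
  simp [dg, Finsupp.single_apply]

lemma dg_add (m m' : Fin n →₀ ℕ) : dg (m + m') = dg m + dg m' := by
  simp [dg, Finset.sum_add_distrib]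

lemma coeff_mvPderiv (i : Fin n) (a : MvPowerSeries (Fin n) K) (m : Fin n →₀ ℕ) :
    MvPowerSeries.coeff m (mvPderiv i a)
      = ((m i + 1 : ℕ) : K) * MvPowerSeries.coeff (m + Finsupp.single i 1) a := rfl

/-- `a` has order at least `k`: all coefficients in degree `< k` vanish. -/
def ordGE (k : ℕ) (a : A) : Prop :=
  ∀ m : Fin n →₀ ℕ, dg m < k → MvPowerSeries.coeff m a = 0

lemma ordGE_mono {k k' : ℕ} (h : k' ≤ k) {a : A} (ha : ordGE k a) : ordGE k' a :=
  fun m hm => ha m (lt_of_lt_of_le hm h)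

lemma ordGE_zero (a : A) : ordGE 0 a := fun _ hm => absurd hm (Nat.not_lt_zero _)

lemma ordGE_of_zero (k : ℕ) : ordGE k (0 : A) := fun m _ => by simp

lemma ordGE.add {k : ℕ} {a b : A} (ha : ordGE k a) (hb : ordGE k b) : ordGE k (a + b) := by
  intro m hm; simp [map_add, ha m hm, hb m hm]

lemma ordGE.neg {k : ℕ} {a : A} (ha : ordGE k a) : ordGE k (-a) := by
  intro m hm; simp [ha m hm]

lemma ordGE.sub {k : ℕ} {a b : A} (ha : ordGE k a) (hb : ordGE k b) : ordGE k (a - b) := by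
  simpa [sub_eq_add_neg] using ha.add hb.neg

lemma ordGE.smul {k : ℕ} (c : K) {a : A} (ha : ordGE k a) : ordGE k (c • a) := by
  intro m hm; simp [MvPowerSeries.coeff_smul, ha m hm]

lemma ordGE.mul {j k : ℕ} {a b : A} (ha : ordGE j a) (hb : ordGE k b) :
    ordGE (j + k) (a * b) := by
  intro m hm
  rw [MvPowerSeries.coeff_mul]
  refine Finset.sum_eq_zero fun p hp => ?_
  rw [Finset.HasAntidiagonal.mem_antidiagonal] at hp
  have hdg : dg p.1 + dg p.2 < j + k := by
    have : dg (p.1 + p.2) = dg p.1 + dg p.2 := by simp [dg, Finset.sum_add_distrib]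
    rw [hp] at this; omega
  rcases lt_or_ge (dg p.1) j with h1 | h1
  · rw [ha p.1 h1, zero_mul]
  · rw [hb p.2 (by omega), mul_zero]

lemma ordGE.mul_left {k : ℕ} (a : A) {b : A} (hb : ordGE k b) : ordGE k (a * b) := by
  simpa using (ordGE_zero a).mul hb

lemma ordGE.mul_right {k : ℕ} {a : A} (ha : ordGE k a) (b : A) : ordGE k (a * b) := by
  simpa using ha.mul (ordGE_zero b)

lemma dg_eq_zero {m : Fin n →₀ ℕ} (h : dg m = 0) : m = 0 := by
  ext i
  have := Finset.sum_eq_zero_iff.mp h i (Finset.mem_univ i)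
  simpa using this

lemma exists_add_single {m : Fin n →₀ ℕ} {i : Fin n} (hi : m i ≠ 0) :
    ∃ m', m' + Finsupp.single i 1 = m ∧ dg m' + 1 = dg m := by
  have hmm : m - Finsupp.single i 1 + Finsupp.single i 1 = m := by
    ext j
    simp only [Finsupp.add_apply, Finsupp.tsub_apply, Finsupp.single_apply]
    by_cases hji : i = j
    · subst hji; simp only [eq_self_iff_true, if_true]; omega
    · simp [hji]
  refine ⟨m - Finsupp.single i 1, hmm, ?_⟩
  conv_rhs => rw [← hmm]
  rw [dg_add, dg_single]

lemma ordGE_sum {k : ℕ} {ι : Type*} {t : Finset ι} {f : ι → A}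
    (h : ∀ i ∈ t, ordGE k (f i)) : ordGE k (∑ i ∈ t, f i) := by
  intro m hm
  rw [map_sum]
  exact Finset.sum_eq_zero fun i hi => h i hi m hm

lemma eq_zero_of_forall_ordGE {a : A} (h : ∀ k, ordGE k a) : a = 0 := by
  ext m
  simpa using h (dg m + 1) m (Nat.lt_succ_self _)

lemma ordGE_X_pow (i : Fin n) (j : ℕ) : ordGE j ((X i : A) ^ j) := by
  intro m hm
  rw [MvPowerSeries.coeff_X_pow, if_neg]
  intro hmm
  rw [hmm, dg_single] at hm
  omega

lemma constantCoeff_eq_zero_of_ordGE {a : A} (h : ordGE 1 a) :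
    (MvPowerSeries.constantCoeff (σ := Fin n) (R := K)) a = 0 := by
  have := h 0 (by simp [dg])
  simpa using this

lemma ordGE_mvPderiv {k : ℕ} {a : A} (ha : ordGE k a) (i : Fin n) :
    ordGE (k - 1) (mvPderiv i a) := by
  intro m hm
  show ((m i + 1 : ℕ) : K) * MvPowerSeries.coeff (m + Finsupp.single i 1) a = 0
  rw [ha _ (by rw [dg_add, dg_single]; omega), mul_zero]

lemma mvPderiv_C (i : Fin n) (c : K) : mvPderiv i ((MvPowerSeries.C (σ := Fin n) (R := K)) c) = 0 := by
  ext m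
  have hne : m + Finsupp.single i 1 ≠ 0 := by
    intro h
    have := DFunLike.congr_fun h i
    simp at this
  calc MvPowerSeries.coeff m (mvPderiv i ((MvPowerSeries.C (σ := Fin n) (R := K)) c))
      = ((m i + 1 : ℕ) : K) * MvPowerSeries.coeff (m + Finsupp.single i 1)
          ((MvPowerSeries.C (σ := Fin n) (R := K)) c) := rfl
    _ = 0 := by rw [MvPowerSeries.coeff_C, if_neg hne, mul_zero]
    _ = MvPowerSeries.coeff m 0 := by rw [map_zero]

lemma mvPderiv_one (i : Fin n) : mvPderiv i (1 : A) = 0 := by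
  simpa using mvPderiv_C (K := K) i 1

lemma eq_C_of_mvPderiv_eq_zero [CharZero K] {a : A}
    (h : ∀ i, mvPderiv i a = 0) :
    a = (MvPowerSeries.C (σ := Fin n) (R := K)) ((MvPowerSeries.constantCoeff (σ := Fin n) (R := K)) a) := by
  ext m
  rw [MvPowerSeries.coeff_C]
  by_cases hm : m = 0
  · subst hm; simp
  · rw [if_neg hm]
    obtain ⟨i, hi⟩ : ∃ i, m i ≠ 0 := by
      by_contra hc
      push_neg at hc
      exact hm (Finsupp.ext fun i => hc i)
    have hmm : m - Finsupp.single i 1 + Finsupp.single i 1 = m := by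
      ext j
      simp only [Finsupp.add_apply, Finsupp.tsub_apply, Finsupp.single_apply]
      by_cases hji : i = j
      · subst hji; simp only [eq_self_iff_true, if_true]; omega
      · simp [hji]
    obtain ⟨m', hmm⟩ : ∃ m', m' + Finsupp.single i 1 = m := ⟨_, hmm⟩
    have h2 : ((m' i + 1 : ℕ) : K)
        * MvPowerSeries.coeff (m' + Finsupp.single i 1) a = 0 := congrFun (h i) m'
    rw [hmm] at h2
    have h3 : ((m' i + 1 : ℕ) : K) ≠ 0 := Nat.cast_ne_zero.mpr (Nat.succ_ne_zero _)
    exact (mul_eq_zero.mp h2).resolve_left h3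

/-- derivative of a power of `X i` in the same variable -/
lemma mvPderiv_X_pow_self (i : Fin n) (j : ℕ) :
    mvPderiv i ((X i : A) ^ (j + 1)) = ((j + 1 : ℕ) : K) • (X i : A) ^ j := by
  ext m
  have key : MvPowerSeries.coeff m (mvPderiv i ((X i : A) ^ (j+1)))
      = ((m i + 1 : ℕ) : K)
        * MvPowerSeries.coeff (m + Finsupp.single i 1) ((X i : A) ^ (j+1)) := rfl
  rw [key, MvPowerSeries.coeff_smul, MvPowerSeries.coeff_X_pow, MvPowerSeries.coeff_X_pow]
  by_cases hm : m = Finsupp.single i j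
  · subst hm
    have h1 : Finsupp.single i j + Finsupp.single i 1 = Finsupp.single i (j+1) := by
      rw [← Finsupp.single_add]
    rw [h1, if_pos rfl, if_pos rfl]
    simp [Finsupp.single_apply]
  · have hne : m + Finsupp.single i 1 ≠ Finsupp.single i (j+1) := by
      intro hc
      apply hm
      ext l
      have := DFunLike.congr_fun hc l
      simp only [Finsupp.add_apply, Finsupp.single_apply] at this ⊢
      by_cases hl : i = l
      · subst hl; simp only [eq_self_iff_true, if_true] at this ⊢; omega
      · simp only [if_neg hl] at this ⊢; omega
    rw [if_neg hne, if_neg hm, mul_zero, mul_zero]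

lemma mvPderiv_X_pow_ne {i l : Fin n} (hli : l ≠ i) (j : ℕ) :
    mvPderiv l ((X i : A) ^ j) = 0 := by
  ext m
  have hne : m + Finsupp.single l 1 ≠ Finsupp.single i j := by
    intro hc
    have := DFunLike.congr_fun hc l
    simp [Finsupp.single_apply, (Ne.symm hli)] at this
  calc MvPowerSeries.coeff m (mvPderiv l ((X i : A) ^ j))
      = ((m l + 1 : ℕ) : K)
        * MvPowerSeries.coeff (m + Finsupp.single l 1) ((X i : A) ^ j) := rfl
    _ = 0 := by rw [MvPowerSeries.coeff_X_pow, if_neg hne, mul_zero]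
    _ = MvPowerSeries.coeff m 0 := by rw [map_zero]

/-- coefficientwise limit of a Cauchy sequence of power series -/
noncomputable def Alim (f : ℕ → A) : A := fun m => MvPowerSeries.coeff m (f (dg m + 1))

lemma coeff_stable {f : ℕ → A} (h : ∀ k, ordGE k (f (k + 1) - f k)) {m : Fin n →₀ ℕ}
    {k1 k2 : ℕ} (h1 : dg m < k1) (h12 : k1 ≤ k2) :
    MvPowerSeries.coeff m (f k1) = MvPowerSeries.coeff m (f k2) := by
  induction k2, h12 using Nat.le_induction with
  | base => rfl
  | succ k2 hk2 ih =>
    rw [ih]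
    have := h k2 m (by omega)
    rw [map_sub, sub_eq_zero] at this
    exact this.symm

lemma ordGE_Alim_sub {f : ℕ → A} (h : ∀ k, ordGE k (f (k + 1) - f k)) (k : ℕ) :
    ordGE k (Alim f - f k) := by
  intro m hm
  rw [map_sub]
  have h1 : MvPowerSeries.coeff m (Alim f) = MvPowerSeries.coeff m (f (dg m + 1)) := rfl
  rw [h1]
  rcases le_total (dg m + 1) k with hc | hc
  · rw [coeff_stable h (Nat.lt_succ_self _) hc, sub_self]
  · rw [coeff_stable h hm hc, sub_self]


/-- scalar `(-1)^j / j!` -/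
noncomputable def cK (K : Type*) [Field K] (j : ℕ) : K := (-1) ^ j * (j.factorial : K)⁻¹

lemma cK_zero : cK K 0 = 1 := by simp [cK]

lemma cK_mul_succ [CharZero K] (j : ℕ) :
    cK K (j + 1) * ((j + 1 : ℕ) : K) = -(cK K j) := by
  have h1 : (j.factorial : K) ≠ 0 := Nat.cast_ne_zero.mpr (Nat.factorial_ne_zero j)
  have h2 : ((j : K) + 1) ≠ 0 := Nat.cast_add_one_ne_zero j
  rw [cK, cK, Nat.factorial_succ]
  push_cast
  field_simp
  ring

set_option linter.unusedSectionVars false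

section Mod

variable {M : Type*} [AddCommGroup M] [Module (MvPowerSeries (Fin n) K) M] [Module K M]
  [IsScalarTower K (MvPowerSeries (Fin n) K) M] [SMulCommClass K (MvPowerSeries (Fin n) K) M]
variable (D : Fin n → (M →ₗ[K] M)) {r : ℕ} {mg : Fin r → M}
  (co : M → Fin r → MvPowerSeries (Fin n) K) {Γ : Fin n → Fin r → Fin r → MvPowerSeries (Fin n) K}

lemma co_eq (hco : ∀ x, ∑ j, co x j • mg j = x)
    (hun : ∀ b : Fin r → MvPowerSeries (Fin n) K, ∑ j, b j • mg j = 0 → b = 0)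
    {x : M} {b : Fin r → MvPowerSeries (Fin n) K}
    (h : ∑ j, b j • mg j = x) : co x = b := by
  have h0 : ∑ j, (co x j - b j) • mg j = 0 := by
    simp only [sub_smul, Finset.sum_sub_distrib, h, hco x, sub_self]
  have := hun _ h0
  funext j
  have hj := congrFun this j
  simpa [sub_eq_zero] using hj

lemma co_zero (hco : ∀ x, ∑ j, co x j • mg j = x)
    (hun : ∀ b : Fin r → MvPowerSeries (Fin n) K, ∑ j, b j • mg j = 0 → b = 0) : co (0 : M) = 0 := co_eq co hco hun (by simp)

lemma co_sub (hco : ∀ x, ∑ j, co x j • mg j = x)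
    (hun : ∀ b : Fin r → MvPowerSeries (Fin n) K, ∑ j, b j • mg j = 0 → b = 0)
    (x y : M) : co (x - y) = co x - co y := by
  apply co_eq co hco hun
  simp only [Pi.sub_apply, sub_smul, Finset.sum_sub_distrib, hco x, hco y]

lemma co_neg (hco : ∀ x, ∑ j, co x j • mg j = x)
    (hun : ∀ b : Fin r → MvPowerSeries (Fin n) K, ∑ j, b j • mg j = 0 → b = 0)
    (x : M) : co (-x) = - co x := by
  apply co_eq co hco hun
  simp only [Pi.neg_apply, neg_smul]
  rw [Finset.sum_neg_distrib, hco x]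

lemma co_smulA (hco : ∀ x, ∑ j, co x j • mg j = x)
    (hun : ∀ b : Fin r → MvPowerSeries (Fin n) K, ∑ j, b j • mg j = 0 → b = 0)
    (a : MvPowerSeries (Fin n) K) (x : M) :
    co (a • x) = fun j => a * co x j := by
  apply co_eq co hco hun
  simp only [mul_smul, ← Finset.smul_sum, hco x]

lemma co_smulK (hco : ∀ x, ∑ j, co x j • mg j = x)
    (hun : ∀ b : Fin r → MvPowerSeries (Fin n) K, ∑ j, b j • mg j = 0 → b = 0)
    (c : K) (x : M) : co (c • x) = fun j => c • co x j := by
  apply co_eq co hco hun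
  simp only [smul_assoc, ← Finset.smul_sum, hco x]

lemma Dsum (hΓ : ∀ i j, D i (mg j) = ∑ k, Γ i j k • mg k)
    (hleib : ∀ (i : Fin n) (a : MvPowerSeries (Fin n) K) (x : M),
      D i (a • x) = (mvPderiv i a) • x + a • D i x)
    (i : Fin n) (b : Fin r → MvPowerSeries (Fin n) K) :
    D i (∑ j, b j • mg j) = ∑ j, (mvPderiv i (b j) + ∑ k, b k * Γ i k j) • mg j := by
  rw [map_sum]
  have h1 : ∀ j, D i (b j • mg j)
      = mvPderiv i (b j) • mg j + ∑ k, (b j * Γ i j k) • mg k := by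
    intro j
    rw [hleib, hΓ, Finset.smul_sum]
    simp_rw [smul_smul]
  rw [Finset.sum_congr rfl fun j _ => h1 j, Finset.sum_add_distrib, Finset.sum_comm]
  rw [← Finset.sum_add_distrib]
  apply Finset.sum_congr rfl
  intro j _
  rw [add_smul, Finset.sum_smul]

lemma co_D (hco : ∀ x, ∑ j, co x j • mg j = x)
    (hun : ∀ b : Fin r → MvPowerSeries (Fin n) K, ∑ j, b j • mg j = 0 → b = 0)
    (hΓ : ∀ i j, D i (mg j) = ∑ k, Γ i j k • mg k)
    (hleib : ∀ (i : Fin n) (a : MvPowerSeries (Fin n) K) (x : M),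
      D i (a • x) = (mvPderiv i a) • x + a • D i x)
    (i : Fin n) (x : M) :
    co (D i x) = fun j => mvPderiv i (co x j) + ∑ k, co x k * Γ i k j := by
  apply co_eq co hco hun
  rw [← Dsum D hΓ hleib i (co x), hco x]

/-- filtration on `M` through coordinates -/
def NN (s : ℕ) (x : M) : Prop := ∀ j, ordGE s (co x j)

lemma NN_mono {s s' : ℕ} (h : s' ≤ s) {x : M} (hx : NN co s x) : NN co s' x :=
  fun j => ordGE_mono h (hx j)

lemma NN_zero (hco : ∀ x, ∑ j, co x j • mg j = x)
    (hun : ∀ b : Fin r → MvPowerSeries (Fin n) K, ∑ j, b j • mg j = 0 → b = 0) (s : ℕ) : NN co s (0 : M) := by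
  intro j
  rw [co_zero co hco hun]
  exact ordGE_of_zero s

lemma NN_add (hco : ∀ x, ∑ j, co x j • mg j = x)
    (hun : ∀ b : Fin r → MvPowerSeries (Fin n) K, ∑ j, b j • mg j = 0 → b = 0)
    {s : ℕ} {x y : M} (hx : NN co s x) (hy : NN co s y) : NN co s (x + y) := by
  intro j
  have : co (x + y) = co x + co y := by
    apply co_eq co hco hun
    simp only [Pi.add_apply, add_smul, Finset.sum_add_distrib, hco x, hco y]
  rw [this]
  exact (hx j).add (hy j)

lemma NN_sub (hco : ∀ x, ∑ j, co x j • mg j = x)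
    (hun : ∀ b : Fin r → MvPowerSeries (Fin n) K, ∑ j, b j • mg j = 0 → b = 0)
    {s : ℕ} {x y : M} (hx : NN co s x) (hy : NN co s y) : NN co s (x - y) := by
  intro j
  rw [co_sub co hco hun]
  exact (hx j).sub (hy j)

lemma NN_neg (hco : ∀ x, ∑ j, co x j • mg j = x)
    (hun : ∀ b : Fin r → MvPowerSeries (Fin n) K, ∑ j, b j • mg j = 0 → b = 0)
    {s : ℕ} {x : M} (hx : NN co s x) : NN co s (-x) := by
  intro j
  rw [co_neg co hco hun]
  exact (hx j).neg

lemma NN_sum (hco : ∀ x, ∑ j, co x j • mg j = x)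
    (hun : ∀ b : Fin r → MvPowerSeries (Fin n) K, ∑ j, b j • mg j = 0 → b = 0)
    {s : ℕ} {ι : Type*} (t : Finset ι) (f : ι → M) (h : ∀ i ∈ t, NN co s (f i)) :
    NN co s (∑ i ∈ t, f i) :=
  Finset.sum_induction f _ (fun _ _ => NN_add co hco hun) (NN_zero co hco hun s) h

lemma NN_smulA (hco : ∀ x, ∑ j, co x j • mg j = x)
    (hun : ∀ b : Fin r → MvPowerSeries (Fin n) K, ∑ j, b j • mg j = 0 → b = 0)
    {u s : ℕ} {a : MvPowerSeries (Fin n) K} (ha : ordGE u a) {x : M} (hx : NN co s x) :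
    NN co (u + s) (a • x) := by
  intro j
  rw [co_smulA co hco hun]
  exact ha.mul (hx j)

lemma NN_smulK (hco : ∀ x, ∑ j, co x j • mg j = x)
    (hun : ∀ b : Fin r → MvPowerSeries (Fin n) K, ∑ j, b j • mg j = 0 → b = 0)
    (c : K) {s : ℕ} {x : M} (hx : NN co s x) : NN co s (c • x) := by
  intro j
  rw [co_smulK co hco hun]
  exact (hx j).smul c

lemma NN_D (hco : ∀ x, ∑ j, co x j • mg j = x)
    (hun : ∀ b : Fin r → MvPowerSeries (Fin n) K, ∑ j, b j • mg j = 0 → b = 0)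
    (hΓ : ∀ i j, D i (mg j) = ∑ k, Γ i j k • mg k)
    (hleib : ∀ (i : Fin n) (a : MvPowerSeries (Fin n) K) (x : M),
      D i (a • x) = (mvPderiv i a) • x + a • D i x)
    {s : ℕ} {x : M} (hx : NN co s x) (i : Fin n) : NN co (s - 1) (D i x) := by
  intro j
  rw [co_D D co hco hun hΓ hleib]
  refine (ordGE_mvPderiv (hx j) i).add (ordGE_mono (Nat.sub_le s 1) (ordGE_sum ?_))
  intro k _
  exact (hx k).mul_right _

lemma End_pow_succ (f : M →ₗ[K] M) (j : ℕ) (x : M) : (f ^ (j + 1)) x = f ((f ^ j) x) := by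
  rw [pow_succ']
  rfl

lemma End_pow_comm (hcm : ∀ i j x, D i (D j x) = D j (D i x)) (i l : Fin n) (j : ℕ) (x : M) :
    D l ((D i ^ j) x) = (D i ^ j) (D l x) := by
  induction j with
  | zero => simp [pow_zero, Module.End.one_apply]
  | succ j ih =>
    rw [End_pow_succ, End_pow_succ, hcm l i, ih]

lemma NN_Dpow (hco : ∀ x, ∑ j, co x j • mg j = x)
    (hun : ∀ b : Fin r → MvPowerSeries (Fin n) K, ∑ j, b j • mg j = 0 → b = 0)
    (hΓ : ∀ i j, D i (mg j) = ∑ k, Γ i j k • mg k)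
    (hleib : ∀ (i : Fin n) (a : MvPowerSeries (Fin n) K) (x : M),
      D i (a • x) = (mvPderiv i a) • x + a • D i x)
    {s : ℕ} {x : M} (hx : NN co s x) (i : Fin n) (l : ℕ) :
    NN co (s - l) ((D i ^ l) x) := by
  induction l with
  | zero => simpa [pow_zero, Module.End.one_apply] using hx
  | succ l ih =>
    rw [End_pow_succ]
    have := NN_D D co hco hun hΓ hleib ih i
    rwa [Nat.sub_sub] at this

lemma NN_eq_zero (hco : ∀ x, ∑ j, co x j • mg j = x)
    (hun : ∀ b : Fin r → MvPowerSeries (Fin n) K, ∑ j, b j • mg j = 0 → b = 0)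
    {x : M} (h : ∀ s, NN co s x) : x = 0 := by
  have hc : ∀ j, co x j = 0 := fun j => eq_zero_of_forall_ordGE (fun s => h s j)
  rw [← hco x]
  apply Finset.sum_eq_zero
  intro j _
  rw [hc j, zero_smul]

/-- truncated Taylor operator in the `i`-th variable -/
noncomputable def Q (i : Fin n) (k : ℕ) (x : M) : M :=
  ∑ j ∈ Finset.range k, cK K j • (((X i : MvPowerSeries (Fin n) K) ^ j) • ((D i ^ j) x))

lemma Q_one (i : Fin n) (x : M) : Q D i 1 x = x := by
  simp [Q, cK_zero]

lemma Q_sub (i : Fin n) (k : ℕ) (x y : M) : Q D i k (x - y) = Q D i k x - Q D i k y := by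
  simp [Q, map_sub, smul_sub, Finset.sum_sub_distrib]

lemma Q_succ_sub (i : Fin n) (k : ℕ) (x : M) :
    Q D i (k + 1) x - Q D i k x
      = cK K k • (((X i : MvPowerSeries (Fin n) K) ^ k) • ((D i ^ k) x)) := by
  rw [Q, Q, Finset.sum_range_succ]
  exact add_sub_cancel_left _ _

lemma NN_Q (hco : ∀ x, ∑ j, co x j • mg j = x)
    (hun : ∀ b : Fin r → MvPowerSeries (Fin n) K, ∑ j, b j • mg j = 0 → b = 0)
    (hΓ : ∀ i j, D i (mg j) = ∑ k, Γ i j k • mg k)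
    (hleib : ∀ (i : Fin n) (a : MvPowerSeries (Fin n) K) (x : M),
      D i (a • x) = (mvPderiv i a) • x + a • D i x)
    {s : ℕ} {x : M} (hx : NN co s x) (i : Fin n) (k : ℕ) : NN co s (Q D i k x) := by
  apply NN_sum co hco hun
  intro j _
  apply NN_smulK co hco hun
  refine NN_mono co (show s ≤ j + (s - j) by omega) ?_
  exact NN_smulA co hco hun (ordGE_X_pow i j) (NN_Dpow D co hco hun hΓ hleib hx i j)

lemma D_Q_self [CharZero K]
    (hleib : ∀ (i : Fin n) (a : MvPowerSeries (Fin n) K) (x : M),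
      D i (a • x) = (mvPderiv i a) • x + a • D i x)
    (i : Fin n) (k : ℕ) (x : M) :
    D i (Q D i (k + 1) x)
      = cK K k • (((X i : MvPowerSeries (Fin n) K) ^ k) • ((D i ^ (k + 1)) x)) := by
  rw [Q, map_sum]
  have hterm : ∀ j, D i (cK K j • (((X i : MvPowerSeries (Fin n) K) ^ j) • ((D i ^ j) x)))
      = cK K j • ((mvPderiv i ((X i : MvPowerSeries (Fin n) K) ^ j)) • ((D i ^ j) x))
        + cK K j • (((X i : MvPowerSeries (Fin n) K) ^ j) • ((D i ^ (j + 1)) x)) := by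
    intro j
    rw [map_smul, hleib, smul_add, End_pow_succ]
  rw [Finset.sum_congr rfl fun j _ => hterm j, Finset.sum_add_distrib]
  have h1 : ∑ j ∈ Finset.range (k + 1),
        cK K j • ((mvPderiv i ((X i : MvPowerSeries (Fin n) K) ^ j)) • ((D i ^ j) x))
      = - ∑ j ∈ Finset.range k,
          cK K j • (((X i : MvPowerSeries (Fin n) K) ^ j) • ((D i ^ (j + 1)) x)) := by
    rw [Finset.sum_range_succ']
    have hf0 : cK K 0 • ((mvPderiv i ((X i : MvPowerSeries (Fin n) K) ^ 0)) • ((D i ^ 0) x))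
        = 0 := by
      rw [pow_zero, mvPderiv_one]
      simp
    rw [hf0, add_zero, ← Finset.sum_neg_distrib]
    apply Finset.sum_congr rfl
    intro j _
    rw [mvPderiv_X_pow_self, smul_assoc, smul_smul, cK_mul_succ, neg_smul]
  rw [h1, Finset.sum_range_succ]
  abel

lemma D_Q_ne
    (hleib : ∀ (i : Fin n) (a : MvPowerSeries (Fin n) K) (x : M),
      D i (a • x) = (mvPderiv i a) • x + a • D i x)
    (hcm : ∀ i j x, D i (D j x) = D j (D i x))
    {l i : Fin n} (hli : l ≠ i) (k : ℕ) (x : M) :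
    D l (Q D i k x) = Q D i k (D l x) := by
  rw [Q, map_sum, Q]
  apply Finset.sum_congr rfl
  intro j _
  rw [map_smul, hleib, mvPderiv_X_pow_ne hli, zero_smul, zero_add,
    End_pow_comm D hcm i l j x]

/-- composite of the truncated Taylor operators over a list of variables -/
noncomputable def QL (k : ℕ) : List (Fin n) → M → M
  | [] => fun x => x
  | i :: l => fun x => Q D i k (QL k l x)

lemma QL_one (l : List (Fin n)) (x : M) : QL D 1 l x = x := by
  induction l with
  | nil => rfl
  | cons i l ih =>
    show Q D i 1 (QL D 1 l x) = x
    rw [ih, Q_one]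

lemma NN_QL (hco : ∀ x, ∑ j, co x j • mg j = x)
    (hun : ∀ b : Fin r → MvPowerSeries (Fin n) K, ∑ j, b j • mg j = 0 → b = 0)
    (hΓ : ∀ i j, D i (mg j) = ∑ k, Γ i j k • mg k)
    (hleib : ∀ (i : Fin n) (a : MvPowerSeries (Fin n) K) (x : M),
      D i (a • x) = (mvPderiv i a) • x + a • D i x)
    {s : ℕ} {x : M} (hx : NN co s x) (k : ℕ) (l : List (Fin n)) :
    NN co s (QL D k l x) := by
  induction l with
  | nil => exact hx
  | cons i l ih => exact NN_Q D co hco hun hΓ hleib ih i k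

lemma D_QL_mem [CharZero K] (hco : ∀ x, ∑ j, co x j • mg j = x)
    (hun : ∀ b : Fin r → MvPowerSeries (Fin n) K, ∑ j, b j • mg j = 0 → b = 0)
    (hΓ : ∀ i j, D i (mg j) = ∑ k, Γ i j k • mg k)
    (hleib : ∀ (i : Fin n) (a : MvPowerSeries (Fin n) K) (x : M),
      D i (a • x) = (mvPderiv i a) • x + a • D i x)
    (hcm : ∀ i j x, D i (D j x) = D j (D i x))
    {{i : Fin n}} {{l : List (Fin n)}} (hmem : i ∈ l) (k : ℕ) (x : M) :
    NN co k (D i (QL D (k + 1) l x)) := by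
  induction l with
  | nil => cases hmem
  | cons h t ih =>
    show NN co k (D i (Q D h (k + 1) (QL D (k + 1) t x)))
    by_cases hih : i = h
    · subst hih
      obtain ⟨k', hk'⟩ : ∃ k', k = k' + 1 - 1 := ⟨k, rfl⟩
      rw [D_Q_self D hleib]
      apply NN_smulK co hco hun
      refine NN_mono co (show k ≤ k + 0 by omega) ?_
      exact NN_smulA co hco hun (ordGE_X_pow i k) (fun j => ordGE_zero _)
    · have hmem' : i ∈ t := (List.mem_cons.mp hmem).resolve_left hih
      rw [D_Q_ne D hleib hcm hih (k + 1) (QL D (k + 1) t x)]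
      exact NN_Q D co hco hun hΓ hleib (ih hmem') h (k + 1)

lemma QL2_sub_self (hco : ∀ x, ∑ j, co x j • mg j = x)
    (hun : ∀ b : Fin r → MvPowerSeries (Fin n) K, ∑ j, b j • mg j = 0 → b = 0)
    (hΓ : ∀ i j, D i (mg j) = ∑ k, Γ i j k • mg k)
    (hleib : ∀ (i : Fin n) (a : MvPowerSeries (Fin n) K) (x : M),
      D i (a • x) = (mvPderiv i a) • x + a • D i x)
    (l : List (Fin n)) (x : M) : NN co 1 (QL D 2 l x - x) := by
  induction l with
  | nil =>
    show NN co 1 (x - x)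
    rw [sub_self]
    exact NN_zero co hco hun 1
  | cons h t ih =>
    show NN co 1 (Q D h 2 (QL D 2 t x) - x)
    have h1 : Q D h 2 (QL D 2 t x) - x
        = (Q D h 2 (QL D 2 t x) - QL D 2 t x) + (QL D 2 t x - x) :=
      (sub_add_sub_cancel _ _ _).symm
    rw [h1]
    refine NN_add co hco hun ?_ ih
    have h2 : Q D h 2 (QL D 2 t x) - QL D 2 t x
        = Q D h (1 + 1) (QL D 2 t x) - Q D h 1 (QL D 2 t x) := by
      rw [Q_one]
    rw [h2, Q_succ_sub]
    apply NN_smulK co hco hun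
    refine NN_mono co (show 1 ≤ 1 + 0 by omega) ?_
    exact NN_smulA co hco hun (ordGE_X_pow h 1) (fun j => ordGE_zero _)

lemma QL_succ_sub (hco : ∀ x, ∑ j, co x j • mg j = x)
    (hun : ∀ b : Fin r → MvPowerSeries (Fin n) K, ∑ j, b j • mg j = 0 → b = 0)
    (hΓ : ∀ i j, D i (mg j) = ∑ k, Γ i j k • mg k)
    (hleib : ∀ (i : Fin n) (a : MvPowerSeries (Fin n) K) (x : M),
      D i (a • x) = (mvPderiv i a) • x + a • D i x)
    (k : ℕ) (l : List (Fin n)) (x : M) :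
    NN co (k + 1) (QL D (k + 2) l x - QL D (k + 1) l x) := by
  induction l with
  | nil =>
    show NN co (k + 1) (x - x)
    rw [sub_self]
    exact NN_zero co hco hun _
  | cons h t ih =>
    show NN co (k + 1)
      (Q D h (k + 2) (QL D (k + 2) t x) - Q D h (k + 1) (QL D (k + 1) t x))
    have h1 : Q D h (k + 2) (QL D (k + 2) t x) - Q D h (k + 1) (QL D (k + 1) t x)
        = (Q D h (k + 2) (QL D (k + 2) t x) - Q D h (k + 2) (QL D (k + 1) t x))
          + (Q D h (k + 2) (QL D (k + 1) t x) - Q D h (k + 1) (QL D (k + 1) t x)) :=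
      (sub_add_sub_cancel _ _ _).symm
    rw [h1, ← Q_sub]
    apply NN_add co hco hun
    · exact NN_Q D co hco hun hΓ hleib ih h (k + 2)
    · rw [Q_succ_sub]
      apply NN_smulK co hco hun
      refine NN_mono co (show k + 1 ≤ (k + 1) + 0 by omega) ?_
      exact NN_smulA co hco hun (ordGE_X_pow h (k + 1)) (fun j => ordGE_zero _)

lemma exists_lim (hco : ∀ x, ∑ j, co x j • mg j = x)
    (hun : ∀ b : Fin r → MvPowerSeries (Fin n) K, ∑ j, b j • mg j = 0 → b = 0)
    (xseq : ℕ → M) (hc : ∀ k, NN co (k + 1) (xseq (k + 1) - xseq k)) :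
    ∃ L, ∀ k, NN co k (L - xseq k) := by
  refine ⟨∑ j, Alim (fun k => co (xseq k) j) • mg j, ?_⟩
  intro k
  have hL : co (∑ j, Alim (fun k => co (xseq k) j) • mg j)
      = fun j => Alim (fun k => co (xseq k) j) := co_eq co hco hun rfl
  intro j
  rw [co_sub co hco hun, Pi.sub_apply, hL]
  refine ordGE_Alim_sub (fun k' => ?_) k
  have := hc k' j
  rw [co_sub co hco hun] at this
  simp only [Pi.sub_apply] at this
  exact ordGE_mono (by omega) this

lemma exists_horiz [CharZero K] (hco : ∀ x, ∑ j, co x j • mg j = x)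
    (hun : ∀ b : Fin r → MvPowerSeries (Fin n) K, ∑ j, b j • mg j = 0 → b = 0)
    (hΓ : ∀ i j, D i (mg j) = ∑ k, Γ i j k • mg k)
    (hleib : ∀ (i : Fin n) (a : MvPowerSeries (Fin n) K) (x : M),
      D i (a • x) = (mvPderiv i a) • x + a • D i x)
    (hcm : ∀ i j x, D i (D j x) = D j (D i x))
    (x : M) :
    ∃ w, (∀ i, D i w = 0) ∧ NN co 1 (x - w) := by
  obtain ⟨L, hL⟩ := exists_lim co hco hun (fun k => QL D (k + 1) (List.finRange n) x)
    (fun k => QL_succ_sub D co hco hun hΓ hleib k (List.finRange n) x)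
  refine ⟨L, ?_, ?_⟩
  · intro i
    apply NN_eq_zero co hco hun
    intro s
    have h1 : D i L = D i (L - QL D (s + 2) (List.finRange n) x)
        + D i (QL D (s + 2) (List.finRange n) x) := by
      rw [map_sub, sub_add_cancel]
    rw [h1]
    apply NN_add co hco hun
    · have := NN_D D co hco hun hΓ hleib (hL (s + 1)) i
      exact NN_mono co (by omega) this
    · have := D_QL_mem D co hco hun hΓ hleib hcm (List.mem_finRange i) (s + 1) x
      exact NN_mono co (by omega) this
  · have h2 : x - L = -(QL D 2 (List.finRange n) x - x)
        + -(L - QL D 2 (List.finRange n) x) := by abel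
    rw [h2]
    apply NN_add co hco hun
    · exact NN_neg co hco hun (QL2_sub_self D co hco hun hΓ hleib (List.finRange n) x)
    · exact NN_neg co hco hun (hL 1)

lemma exists_min_gen :
    ∀ (r : ℕ) (mg : Fin r → M),
      Submodule.span (MvPowerSeries (Fin n) K) (Set.range mg) = ⊤ →
      ∃ (r' : ℕ) (mg' : Fin r' → M),
        Submodule.span (MvPowerSeries (Fin n) K) (Set.range mg') = ⊤ ∧
        ∀ a : Fin r' → MvPowerSeries (Fin n) K, ∑ j, a j • mg' j = 0 →
          ∀ j, (MvPowerSeries.constantCoeff (σ := Fin n) (R := K)) (a j) = 0 := by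
  intro r
  induction r using Nat.strong_induction_on with
  | _ r ih =>
    intro mg hmg
    by_cases hgood : ∀ a : Fin r → MvPowerSeries (Fin n) K, ∑ j, a j • mg j = 0 →
        ∀ j, (MvPowerSeries.constantCoeff (σ := Fin n) (R := K)) (a j) = 0
    · exact ⟨r, mg, hmg, hgood⟩
    · push_neg at hgood
      obtain ⟨a, ha, j0, hj0⟩ := hgood
      have hu : IsUnit (a j0) :=
        MvPowerSeries.isUnit_iff_constantCoeff.mpr (isUnit_iff_ne_zero.mpr hj0)
      obtain ⟨r', rfl⟩ : ∃ r', r = r' + 1 := ⟨r - 1, by have := j0.pos; omega⟩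
      -- mg j0 lies in the span of the other generators
      have hsum : a j0 • mg j0 = - ∑ i : Fin r', a (j0.succAbove i) • mg (j0.succAbove i) := by
        have := Fin.sum_univ_succAbove (fun j => a j • mg j) j0
        rw [ha] at this
        exact eq_neg_of_add_eq_zero_left this.symm
      have hmem : mg j0 ∈ Submodule.span (MvPowerSeries (Fin n) K)
          (Set.range (mg ∘ j0.succAbove)) := by
        have h1 : mg j0 = (↑hu.unit⁻¹ : MvPowerSeries (Fin n) K) • (a j0 • mg j0) := by
          rw [smul_smul, IsUnit.val_inv_mul, one_smul]
        rw [h1, hsum]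
        refine Submodule.smul_mem _ _ (Submodule.neg_mem _ (Submodule.sum_mem _ ?_))
        intro i _
        exact Submodule.smul_mem _ _ (Submodule.subset_span ⟨i, rfl⟩)
      have hspan' : Submodule.span (MvPowerSeries (Fin n) K)
          (Set.range (mg ∘ j0.succAbove)) = ⊤ := by
        rw [eq_top_iff, ← hmg, Submodule.span_le]
        rintro y ⟨j, rfl⟩
        by_cases hj : j = j0
        · subst hj; exact hmem
        · obtain ⟨j', rfl⟩ := Fin.exists_succAbove_eq hj
          exact Submodule.subset_span ⟨j', rfl⟩
      exact ih r' (by omega) (mg ∘ j0.succAbove) hspan'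

lemma rel_zero [CharZero K]
    (hΓ : ∀ i j, D i (mg j) = ∑ k, Γ i j k • mg k)
    (hleib : ∀ (i : Fin n) (a : MvPowerSeries (Fin n) K) (x : M),
      D i (a • x) = (mvPderiv i a) • x + a • D i x)
    (hrel : ∀ a : Fin r → MvPowerSeries (Fin n) K, ∑ j, a j • mg j = 0 →
      ∀ j, (MvPowerSeries.constantCoeff (σ := Fin n) (R := K)) (a j) = 0) :
    ∀ b : Fin r → MvPowerSeries (Fin n) K, ∑ j, b j • mg j = 0 → b = 0 := by
  have claim : ∀ d : ℕ, ∀ b : Fin r → MvPowerSeries (Fin n) K, ∑ j, b j • mg j = 0 →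
      ∀ (j : Fin r) (m : Fin n →₀ ℕ), dg m = d → MvPowerSeries.coeff m (b j) = 0 := by
    intro d
    induction d using Nat.strong_induction_on with
    | _ d ih =>
      intro b hb j m hm
      by_cases hd : d = 0
      · subst hd
        have hm0 : m = 0 := dg_eq_zero hm
        subst hm0
        rw [MvPowerSeries.coeff_zero_eq_constantCoeff]
        exact hrel b hb j
      · obtain ⟨i, hi⟩ : ∃ i, m i ≠ 0 := by
          by_contra hc
          push_neg at hc
          exact hd (by rw [← hm]; exact Finset.sum_eq_zero fun i _ => hc i)
        obtain ⟨m', hmm, hdg⟩ := exists_add_single hi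
        have hb' : ∑ j, (mvPderiv i (b j) + ∑ k, b k * Γ i k j) • mg j = 0 := by
          rw [← Dsum D hΓ hleib i b, hb, map_zero]
        have hlow : ∀ k, ordGE d (b k) := by
          intro k m'' hm''
          exact ih (dg m'') hm'' b hb k m'' rfl
        have h1 := ih (d - 1) (by omega) _ hb' j m' (by omega)
        rw [map_add] at h1
        have h2 : MvPowerSeries.coeff m' (mvPderiv i (b j))
            = ((m' i + 1 : ℕ) : K) * MvPowerSeries.coeff m (b j) := by
          rw [coeff_mvPderiv, hmm]
        have h3 : MvPowerSeries.coeff m' (∑ k, b k * Γ i k j) = 0 :=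
          ordGE_sum (fun k _ => (hlow k).mul_right _) m' (by omega)
        rw [h2, h3, add_zero] at h1
        have h4 : ((m' i + 1 : ℕ) : K) ≠ 0 := Nat.cast_ne_zero.mpr (Nat.succ_ne_zero _)
        exact (mul_eq_zero.mp h1).resolve_left h4
  intro b hb
  funext j
  ext m
  simp only [Pi.zero_apply, map_zero]
  exact claim (dg m) b hb j m rfl

end Mod

end KatzAux


open KatzAux

/-- Katz: let `K` be a field of characteristic 0, `A = K[[t₁,…,t_n]]`, and
`M` a finitely generated `A`-module with commuting `K`-linear derivations `∂₁,…,∂_n`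
satisfying the Leibniz rule `∂ᵢ(a·m) = (∂a/∂tᵢ)·m + a·∂ᵢ(m)`. Then the multiplication
map `A ⊗_K W → M` is an isomorphism, where `W` is the space of horizontal elements. -/
theorem katz_horizontal_basis [CharZero K]
    [Module.Finite (MvPowerSeries (Fin n) K) M]
    (D : Fin n → (M →ₗ[K] M))
    (hcomm : ∀ i j, (D i).comp (D j) = (D j).comp (D i))
    (hleib : ∀ (i : Fin n) (a : MvPowerSeries (Fin n) K) (m : M),
      D i (a • m) = (mvPderiv i a) • m + a • D i m) :
    Function.Bijective (mulMap D) := by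
  classical
  have hcm : ∀ i j x, D i (D j x) = D j (D i x) := fun i j x => by
    have := LinearMap.ext_iff.mp (hcomm i j) x
    simpa using this
  obtain ⟨s, g, hg⟩ := Module.Finite.exists_fin (R := MvPowerSeries (Fin n) K) (M := M)
  obtain ⟨r, mg, hmg, hrel⟩ := exists_min_gen s g hg
  have hGa : ∀ (i : Fin n) (j : Fin r),
      ∃ γ : Fin r → MvPowerSeries (Fin n) K, ∑ k, γ k • mg k = D i (mg j) := by
    intro i j
    apply (Submodule.mem_span_range_iff_exists_fun _).mp
    rw [hmg]; trivial
  choose Γ hΓ0 using hGa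
  have hΓ : ∀ i j, D i (mg j) = ∑ k, Γ i j k • mg k := fun i j => (hΓ0 i j).symm
  have hun := rel_zero D hΓ hleib hrel
  have hcoex : ∀ x : M, ∃ c : Fin r → MvPowerSeries (Fin n) K, ∑ j, c j • mg j = x := by
    intro x
    apply (Submodule.mem_span_range_iff_exists_fun _).mp
    rw [hmg]; trivial
  choose co hco using hcoex
  have hwj : ∀ j, ∃ w, (∀ i, D i w = 0) ∧ NN co 1 (mg j - w) := fun j =>
    exists_horiz D co hco hun hΓ hleib hcm (mg j)
  choose w hwD hwN using hwj
  -- transition matrix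
  set U : Matrix (Fin r) (Fin r) (MvPowerSeries (Fin n) K) :=
    fun j k => (1 : Matrix (Fin r) (Fin r) (MvPowerSeries (Fin n) K)) j k
      - co (mg j - w j) k with hUdef
  have hU : ∀ j, w j = ∑ k, U j k • mg k := by
    intro j
    have h1 : ∑ k, co (mg j - w j) k • mg k = mg j - w j := hco _
    have h2 : ∑ k, (1 : Matrix (Fin r) (Fin r) (MvPowerSeries (Fin n) K)) j k • mg k
        = mg j := by
      simp [Matrix.one_apply, ite_smul]
    have h3 : ∑ k, U j k • mg k
        = (∑ k, (1 : Matrix (Fin r) (Fin r) (MvPowerSeries (Fin n) K)) j k • mg k)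
          - ∑ k, co (mg j - w j) k • mg k := by
      simp only [hUdef, sub_smul, Finset.sum_sub_distrib]
    rw [h3, h1, h2]
    abel
  have hmap : U.map ((MvPowerSeries.constantCoeff (σ := Fin n) (R := K))) = 1 := by
    ext j k
    have h0 : (MvPowerSeries.constantCoeff (σ := Fin n) (R := K)) (co (mg j - w j) k) = 0 :=
      constantCoeff_eq_zero_of_ordGE (hwN j k)
    rw [Matrix.map_apply]
    simp only [hUdef]
    rw [map_sub, h0, sub_zero, Matrix.one_apply, Matrix.one_apply,
      apply_ite ((MvPowerSeries.constantCoeff (σ := Fin n) (R := K))), map_one, map_zero]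
  have hdet : IsUnit U.det := by
    apply MvPowerSeries.isUnit_iff_constantCoeff.mpr
    rw [RingHom.map_det]
    have hmm : ((MvPowerSeries.constantCoeff (σ := Fin n) (R := K))).mapMatrix U
        = U.map ((MvPowerSeries.constantCoeff (σ := Fin n) (R := K))) := rfl
    rw [hmm, hmap, Matrix.det_one]
    exact isUnit_one
  have hUV : U * U⁻¹ = 1 := Matrix.mul_nonsing_inv U hdet
  have hVU : U⁻¹ * U = 1 := Matrix.nonsing_inv_mul U hdet
  -- every element is a combination of the horizontal elements `w j`
  have hwrep : ∀ x : M, ∑ j, (∑ k, co x k * U⁻¹ k j) • w j = x := by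
    intro x
    have h1 : ∀ j, (∑ k, co x k * U⁻¹ k j) • w j
        = ∑ l, ((∑ k, co x k * U⁻¹ k j) * U j l) • mg l := by
      intro j
      rw [hU j, Finset.smul_sum]
      simp_rw [smul_smul]
    rw [Finset.sum_congr rfl fun j _ => h1 j, Finset.sum_comm]
    have h2 : ∀ l, ∑ j, ((∑ k, co x k * U⁻¹ k j) * U j l) • mg l = co x l • mg l := by
      intro l
      rw [← Finset.sum_smul]
      congr 1
      have h3 : ∑ j, (∑ k, co x k * U⁻¹ k j) * U j l
          = ∑ k, co x k * ((U⁻¹ * U) k l) := by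
        simp_rw [Finset.sum_mul, Matrix.mul_apply, Finset.mul_sum]
        rw [Finset.sum_comm]
        apply Finset.sum_congr rfl
        intro k _
        apply Finset.sum_congr rfl
        intro j _
        ring
      rw [h3, hVU]
      simp [Matrix.one_apply]
    rw [Finset.sum_congr rfl fun l _ => h2 l]
    exact hco x
  -- uniqueness of such representations
  have hwun : ∀ a : Fin r → MvPowerSeries (Fin n) K, ∑ j, a j • w j = 0 → a = 0 := by
    intro a ha
    have h1 : ∑ l, (∑ j, a j * U j l) • mg l = 0 := by
      rw [← ha]
      have h4 : ∀ j, a j • w j = ∑ l, (a j * U j l) • mg l := by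
        intro j
        rw [hU j, Finset.smul_sum]
        simp_rw [smul_smul]
      rw [Finset.sum_congr rfl fun j _ => h4 j, Finset.sum_comm]
      apply Finset.sum_congr rfl
      intro l _
      rw [← Finset.sum_smul]
    have h2 := hun _ h1
    funext l
    have h3 : ∑ k, (∑ j, a j * U j k) * U⁻¹ k l = a l := by
      have h5 : ∑ k, (∑ j, a j * U j k) * U⁻¹ k l
          = ∑ j, a j * ((U * U⁻¹) j l) := by
        simp_rw [Finset.sum_mul, Matrix.mul_apply, Finset.mul_sum]
        rw [Finset.sum_comm]
        apply Finset.sum_congr rfl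
        intro k _
        apply Finset.sum_congr rfl
        intro j _
        ring
      rw [h5, hUV]
      simp [Matrix.one_apply]
    rw [← h3]
    rw [Pi.zero_apply]
    apply Finset.sum_eq_zero
    intro k _
    rw [congrFun h2 k, Pi.zero_apply, zero_mul]
  have hWmem : ∀ j, w j ∈ horiz D := fun j i => hwD j i
  have hmul : ∀ (a : MvPowerSeries (Fin n) K) (u : horiz D),
      mulMap D (a ⊗ₜ[K] u) = a • (u : M) := fun a u => rfl
  -- every horizontal element is a K-combination of the `w j`
  have hWspan : ∀ q : M, (∀ i, D i q = 0) → ∃ c : Fin r → K, q = ∑ j, (c j) • w j := by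
    intro q hq
    obtain ⟨aq, hqr⟩ : ∃ aq : Fin r → MvPowerSeries (Fin n) K, ∑ j, aq j • w j = q :=
      ⟨fun j => ∑ k, co q k * U⁻¹ k j, hwrep q⟩
    have hpd : ∀ i j, mvPderiv i (aq j) = 0 := by
      intro i j
      have h4 : D i (∑ j, aq j • w j) = ∑ j, mvPderiv i (aq j) • w j := by
        rw [map_sum]
        apply Finset.sum_congr rfl
        intro j _
        rw [hleib, hwD j i, smul_zero, add_zero]
      rw [hqr, hq i] at h4
      exact congrFun (hwun _ h4.symm) j
    refine ⟨fun j => (MvPowerSeries.constantCoeff (σ := Fin n) (R := K)) (aq j), ?_⟩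
    rw [← hqr]
    apply Finset.sum_congr rfl
    intro j _
    conv_lhs => rw [eq_C_of_mvPderiv_eq_zero (fun i => hpd i j)]
    rw [MvPowerSeries.c_eq_algebraMap, algebraMap_smul]
  -- representation of tensors
  have hrepr : ∀ z : (MvPowerSeries (Fin n) K) ⊗[K] (horiz D),
      ∃ a : Fin r → MvPowerSeries (Fin n) K,
        z = ∑ j, a j ⊗ₜ[K] (⟨w j, hWmem j⟩ : horiz D) := by
    intro z
    induction z using TensorProduct.induction_on with
    | zero =>
      refine ⟨0, ?_⟩
      simp
    | tmul p q =>
      obtain ⟨c, hc⟩ := hWspan (q : M) (fun i => q.2 i)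
      have hq2 : q = ∑ j, c j • (⟨w j, hWmem j⟩ : horiz D) := by
        apply Subtype.ext
        rw [hc]
        simp
      refine ⟨fun j => c j • p, ?_⟩
      rw [hq2, TensorProduct.tmul_sum]
      apply Finset.sum_congr rfl
      intro j _
      rw [TensorProduct.tmul_smul, TensorProduct.smul_tmul']
    | add z1 z2 h1 h2 =>
      obtain ⟨a1, rfl⟩ := h1
      obtain ⟨a2, rfl⟩ := h2
      refine ⟨a1 + a2, ?_⟩
      rw [← Finset.sum_add_distrib]
      apply Finset.sum_congr rfl
      intro j _
      rw [Pi.add_apply, TensorProduct.add_tmul]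
  constructor
  · -- injectivity
    have hker : ∀ z, mulMap D z = 0 → z = 0 := by
      intro z hz
      obtain ⟨a, rfl⟩ := hrepr z
      rw [map_sum] at hz
      simp only [hmul] at hz
      have ha := hwun a hz
      apply Finset.sum_eq_zero
      intro j _
      rw [congrFun ha j, Pi.zero_apply, TensorProduct.zero_tmul]
    intro z1 z2 h
    have := hker (z1 - z2) (by rw [map_sub, h, sub_self])
    exact sub_eq_zero.mp this
  · -- surjectivity
    intro x
    refine ⟨∑ j, (∑ k, co x k * U⁻¹ k j) ⊗ₜ[K] (⟨w j, hWmem j⟩ : horiz D), ?_⟩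
    rw [map_sum]
    simp only [hmul]
    exact hwrep x
end
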